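/- arXiv:math/0601029 — 3 statements merged into one kernel-verified Lean document; each statement's English description precedes it below -/
import Mathlib

section
/- Let (F_n) be a filtration and (η_k) a sequence with η_k adapted to F_k such that η_{k+1} conditioned on F_k is Gaussian with mean zero and variance σ_k² ≤ σ_*² almost surely for all k. Define M̃_n = Σ_{k=1}^n (η_k² − σ_{k-1}²) and ⟨M̃⟩_n = Σ_{k=0}^{n-1} 2σ_k⁴. Then for any α, β > 0, P( sup_k ( M̃_k − (α/2)⟨M̃⟩_k ) ≥ β ) ≤ exp( −β/λ² ) where λ² = 2σ_*² + 1/α. -/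
open MeasureTheory ProbabilityTheory Filter

private lemma aux_log {x : ℝ} (h0 : 0 ≤ x) (h1 : x < 1) :
    -Real.log (1 - x) ≤ x + x ^ 2 / (2 * (1 - x)) := by
  have hx1 : (0:ℝ) < 1 - x := by linarith
  have key : ∀ n : ℕ, -Real.log (1 - x) ≤ x + x ^ 2 / (2 * (1 - x)) + x ^ (n + 1) / (1 - x) := by
    intro n
    have h := Real.abs_log_sub_add_sum_range_le (by rw [abs_of_nonneg h0]; exact h1) n
    rw [abs_of_nonneg h0] at h
    have h2 : -Real.log (1 - x) ≤ (∑ i ∈ Finset.range n, x ^ (i + 1) / (i + 1)) + x ^ (n + 1) / (1 - x) := by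
      have := (abs_le.1 h).1
      linarith
    have hsum : (∑ i ∈ Finset.range n, x ^ (i + 1) / (i + 1)) ≤ x + x ^ 2 / (2 * (1 - x)) := by
      rcases Nat.eq_zero_or_pos n with hn | hn
      · subst hn
        simp
        positivity
      · obtain ⟨m, rfl⟩ : ∃ m, n = m + 1 := ⟨n - 1, (Nat.succ_pred_eq_of_pos hn).symm⟩
        rw [Finset.sum_range_succ']
        have hterm : ∀ i : ℕ, x ^ (i + 1 + 1) / (i + 1 + 1) ≤ x ^ i * (x ^ 2 / 2) := by
          intro i
          rw [div_le_iff₀ (by positivity)]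
          have h1' : x ^ (i + 1 + 1) = x ^ i * x ^ 2 := by ring
          rw [h1']
          have hge : (2:ℝ) ≤ (i:ℝ) + 1 + 1 := by
            have : (0:ℝ) ≤ (i:ℝ) := Nat.cast_nonneg i
            linarith
          have hnn : (0:ℝ) ≤ x ^ i * (x ^ 2 / 2) := by positivity
          nlinarith [mul_le_mul_of_nonneg_left hge hnn]
        have hsum2 : (∑ i ∈ Finset.range m, x ^ (i + 1 + 1) / (i + 1 + 1)) ≤
            (∑ i ∈ Finset.range m, x ^ i) * (x ^ 2 / 2) := by
          rw [Finset.sum_mul]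
          exact Finset.sum_le_sum fun i _ => hterm i
        have hgeom : (∑ i ∈ Finset.range m, x ^ i) ≤ 1 / (1 - x) := by
          rw [le_div_iff₀ hx1]
          have := geom_sum_mul x m
          have hxm : 0 ≤ x ^ m := pow_nonneg h0 m
          nlinarith
        have : (∑ i ∈ Finset.range m, x ^ i) * (x ^ 2 / 2) ≤ (1 / (1 - x)) * (x ^ 2 / 2) :=
          mul_le_mul_of_nonneg_right hgeom (by positivity)
        have heq : (1 / (1 - x)) * (x ^ 2 / 2) = x ^ 2 / (2 * (1 - x)) := by
          rw [div_mul_div_comm, one_mul, mul_comm (1 - x) 2]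
        simp only [Nat.cast_add, Nat.cast_one] at hsum2 ⊢
        push_cast
        push_cast at hsum2
        linarith [hsum2, this, heq ▸ this]
    linarith
  have hlim : Tendsto (fun n : ℕ => x + x ^ 2 / (2 * (1 - x)) + x ^ (n + 1) / (1 - x)) atTop
      (nhds (x + x ^ 2 / (2 * (1 - x)))) := by
    have : Tendsto (fun n : ℕ => x ^ (n + 1)) atTop (nhds 0) :=
      (tendsto_pow_atTop_nhds_zero_of_lt_one h0 h1).comp (tendsto_add_atTop_nat 1)
    have h2 := this.div_const (1 - x)
    simpa using tendsto_const_nhds.add h2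
  exact ge_of_tendsto' hlim key

private lemma aux_key {c α s S : ℝ} (hc : 0 < c) (hα : 0 < α) (hs : 0 ≤ s) (hsS : s ≤ S)
    (h1 : 2 * c * S < 1) (hcα : c ≤ α * (1 - 2 * c * S)) :
    Real.exp (-(c * (s + α * s ^ 2))) * (1 - 2 * c * s) ^ (-(1:ℝ)/2) ≤ 1 := by
  have hxS : 2 * c * s ≤ 2 * c * S := by nlinarith
  have hpos : (0:ℝ) < 1 - 2 * c * s := by linarith
  set x := 2 * c * s with hxdef
  have hx0 : 0 ≤ x := by positivity
  have hx1 : x < 1 := by linarith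
  have hlog := aux_log hx0 hx1
  -- rewrite rpow as exp
  rw [Real.rpow_def_of_pos hpos, ← Real.exp_add]
  rw [Real.exp_le_one_iff]
  -- need : -(c*(s + α s²)) + (-(1)/2) * log(1-x) ≤ 0
  have hbound : -Real.log (1 - x) ≤ x + c * α * s ^ 2 * 2 := by
    have h2 : x ^ 2 / (2 * (1 - x)) ≤ 2 * c * α * s ^ 2 := by
      rw [div_le_iff₀ (by linarith)]
      have hαs : c ≤ α * (1 - x) := le_trans hcα (by nlinarith)
      calc x ^ 2 = (2 * c * s) * s * (2 * c) := by rw [hxdef]; ring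
        _ ≤ (2 * (α * (1 - x)) * s) * s * (2 * c) := by
            have : 2 * c * s ≤ 2 * (α * (1 - x)) * s := by nlinarith
            have h2c : 0 ≤ s * (2 * c) := by positivity
            nlinarith
        _ = 2 * c * α * s ^ 2 * (2 * (1 - x)) := by ring
    linarith
  nlinarith [hbound]

private lemma aux_integrable_mul {Ω : Type*} {m : MeasurableSpace Ω} {mΩ : MeasurableSpace Ω}
    (hm : m ≤ mΩ) {μ : @Measure Ω mΩ} [IsFiniteMeasure μ] {Z W : Ω → ℝ}
    (hZm : StronglyMeasurable[m] Z) (hZ0 : ∀ ω, 0 ≤ Z ω) (hZint : Integrable Z μ)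
    (hW0 : ∀ ω, 0 ≤ W ω) (hWint : Integrable W μ) {C : ℝ}
    (hC : μ[W|m] ≤ᵐ[μ] fun _ => C) :
    Integrable (fun ω => Z ω * W ω) μ := by
  have hZsm : AEStronglyMeasurable Z μ := (hZm.mono hm).aestronglyMeasurable
  have hmeas : AEStronglyMeasurable (fun ω => Z ω * W ω) μ := hZsm.mul hWint.1
  -- truncations
  set Wn : ℕ → Ω → ℝ := fun n ω => min (W ω) n with hWn
  have hWnm : ∀ n : ℕ, AEStronglyMeasurable (Wn n) μ := fun n =>
    (hWint.1.inf aestronglyMeasurable_const : AEStronglyMeasurable (fun ω => min (W ω) (n:ℝ)) μ)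
  have hWnint : ∀ n, Integrable (Wn n) μ := by
    intro n
    refine Integrable.mono' (integrable_const (n:ℝ)) (hWnm n) ?_
    refine Filter.Eventually.of_forall fun ω => ?_
    rw [Real.norm_eq_abs, abs_of_nonneg (le_min (hW0 ω) (Nat.cast_nonneg n))]
    exact min_le_right _ _
  have hZWnint : ∀ n, Integrable (fun ω => Z ω * Wn n ω) μ := by
    intro n
    have := hZint.bdd_mul (hWnm n)
      (ae_of_all _ fun ω => by
        rw [Real.norm_eq_abs, abs_of_nonneg (le_min (hW0 ω) (Nat.cast_nonneg n))]
        exact min_le_right _ _)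
    simpa [mul_comm] using this
  -- integral bound
  have hint_bound : ∀ n, ∫ ω, Z ω * Wn n ω ∂μ ≤ C * ∫ ω, Z ω ∂μ := by
    intro n
    have hpull : μ[fun ω => Z ω * Wn n ω|m] =ᵐ[μ] fun ω => Z ω * (μ[Wn n|m]) ω := by
      have := condExp_mul_of_stronglyMeasurable_left hZm (by simpa [Pi.mul_def] using hZWnint n)
        (hWnint n)
      simpa [Pi.mul_def] using this
    have hcond_le : μ[Wn n|m] ≤ᵐ[μ] fun _ => C :=
      ((condExp_mono (hWnint n) hWint (Filter.Eventually.of_forall fun ω => min_le_left _ _)).trans hC)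
    have hcond_nonneg : 0 ≤ᵐ[μ] μ[Wn n|m] :=
      condExp_nonneg (Filter.Eventually.of_forall fun ω => le_min (hW0 ω) (Nat.cast_nonneg n))
    have hZcond_int : Integrable (fun ω => Z ω * (μ[Wn n|m]) ω) μ := by
      refine Integrable.mono' (hZint.const_mul C) (hZsm.mul integrable_condExp.1) ?_
      filter_upwards [hcond_le, hcond_nonneg] with ω h1 h2
      rw [Real.norm_eq_abs, abs_of_nonneg (mul_nonneg (hZ0 ω) h2), mul_comm C]
      exact mul_le_mul_of_nonneg_left h1 (hZ0 ω)
    calc ∫ ω, Z ω * Wn n ω ∂μ = ∫ ω, (μ[fun ω => Z ω * Wn n ω|m]) ω ∂μ :=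
          (integral_condExp hm (f := fun ω => Z ω * Wn n ω)).symm
      _ = ∫ ω, Z ω * (μ[Wn n|m]) ω ∂μ := integral_congr_ae hpull
      _ ≤ ∫ ω, C * Z ω ∂μ := by
          refine integral_mono_ae hZcond_int (hZint.const_mul C) ?_
          filter_upwards [hcond_le] with ω h1
          rw [mul_comm C]
          exact mul_le_mul_of_nonneg_left h1 (hZ0 ω)
      _ = C * ∫ ω, Z ω ∂μ := integral_const_mul C _
  -- monotone convergence at lintegral level
  refine ⟨hmeas, ?_⟩
  rw [hasFiniteIntegral_iff_norm]
  have hsup : ∀ ω, (⨆ n : ℕ, ENNReal.ofReal (Z ω * Wn n ω)) = ENNReal.ofReal (Z ω * W ω) := by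
    intro ω
    refine iSup_eq_of_tendsto (fun a b hab => ?_) ?_
    · exact ENNReal.ofReal_le_ofReal (mul_le_mul_of_nonneg_left
        (min_le_min le_rfl (Nat.cast_le.2 hab)) (hZ0 ω))
    · have : ∀ᶠ n : ℕ in atTop, ENNReal.ofReal (Z ω * Wn n ω) = ENNReal.ofReal (Z ω * W ω) := by
        filter_upwards [eventually_ge_atTop (Nat.ceil (W ω))] with n hn
        have : min (W ω) n = W ω := min_eq_left ((Nat.le_ceil _).trans (Nat.cast_le.2 hn))
        simp [Wn, this]
      exact tendsto_const_nhds.congr' (by filter_upwards [this] with n h using h.symm)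
  calc ∫⁻ ω, ENNReal.ofReal ‖Z ω * W ω‖ ∂μ = ∫⁻ ω, ENNReal.ofReal (Z ω * W ω) ∂μ := by
        refine lintegral_congr fun ω => ?_
        rw [Real.norm_eq_abs, abs_of_nonneg (mul_nonneg (hZ0 ω) (hW0 ω))]
    _ = ∫⁻ ω, ⨆ n : ℕ, ENNReal.ofReal (Z ω * Wn n ω) ∂μ := by
        refine lintegral_congr fun ω => (hsup ω).symm
    _ = ⨆ n : ℕ, ∫⁻ ω, ENNReal.ofReal (Z ω * Wn n ω) ∂μ := by
        refine lintegral_iSup' (fun n => ENNReal.measurable_ofReal.comp_aemeasurable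
          (hZWnint n).1.aemeasurable) ?_
        refine Filter.Eventually.of_forall fun ω => fun a b hab => ?_
        exact ENNReal.ofReal_le_ofReal (mul_le_mul_of_nonneg_left
          (min_le_min le_rfl (Nat.cast_le.2 hab)) (hZ0 ω))
    _ ≤ ENNReal.ofReal (C * ∫ ω, Z ω ∂μ) := by
        refine iSup_le fun n => ?_
        rw [← ofReal_integral_eq_lintegral_ofReal (hZWnint n)
          (Filter.Eventually.of_forall fun ω => mul_nonneg (hZ0 ω) (le_min (hW0 ω) (Nat.cast_nonneg n)))]
        exact ENNReal.ofReal_le_ofReal (hint_bound n)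
    _ < ⊤ := ENNReal.ofReal_lt_top

/-- Discrete-time exponential martingale estimate for the compensated sum of
squares of conditionally Gaussian increments with uniformly bounded conditional
variances.  The conditional Gaussianity of `η (k+1)` given `ℱ k` (mean zero,
`ℱ k`-measurable variance `(σ k)²`) is encoded via the conditional moment
generating function of the square. -/
theorem exp_martingale_estimate_squares
    {Ω : Type*} {mΩ : MeasurableSpace Ω} {μ : Measure Ω} [IsProbabilityMeasure μ]
    (ℱ : Filtration ℕ mΩ) (η σ : ℕ → Ω → ℝ)
    (hη : ∀ k, StronglyMeasurable[ℱ k] (η k))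
    (hσ : ∀ k, StronglyMeasurable[ℱ k] (σ k))
    (σstarSq : ℝ) (hσstar : 0 < σstarSq)
    (hbdd : ∀ k, ∀ᵐ ω ∂μ, (σ k ω) ^ 2 ≤ σstarSq)
    (hGauss : ∀ k (c : ℝ), 2 * c * σstarSq < 1 →
      μ[fun ω => Real.exp (c * (η (k+1) ω) ^ 2) | ℱ k]
        =ᵐ[μ] fun ω => (1 - 2 * c * (σ k ω) ^ 2) ^ (-(1:ℝ)/2))
    (Mt QMt : ℕ → Ω → ℝ)
    (hMt : ∀ n ω, Mt n ω = ∑ k ∈ Finset.range n, ((η (k+1) ω) ^ 2 - (σ k ω) ^ 2))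
    (hQMt : ∀ n ω, QMt n ω = ∑ k ∈ Finset.range n, 2 * (σ k ω) ^ 4)
    (α β : ℝ) (hα : 0 < α) (hβ : 0 < β) :
    μ {ω | ∃ n, β ≤ Mt n ω - α / 2 * QMt n ω}
      ≤ ENNReal.ofReal (Real.exp (-(β / (2 * σstarSq + 1 / α)))) := by
  classical
  have hd : 0 < 2 * σstarSq + 1 / α := by positivity
  obtain ⟨c, hc, hcd, hcdα⟩ : ∃ c : ℝ, 0 < c ∧ c * (2 * σstarSq + 1 / α) = 1 ∧
      c * (2 * σstarSq * α + 1) = α := by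
    refine ⟨(2 * σstarSq + 1 / α)⁻¹, inv_pos.2 hd, inv_mul_cancel₀ hd.ne', ?_⟩
    rw [inv_mul_eq_iff_eq_mul₀ hd.ne']
    field_simp
  have h2s : 2 * σstarSq < 2 * σstarSq + 1 / α := by
    have := one_div_pos.2 hα
    linarith
  have hc1 : 2 * c * σstarSq < 1 := by
    nlinarith [mul_lt_mul_of_pos_right h2s hc, hcd]
  have hcα : c ≤ α * (1 - 2 * c * σstarSq) := by
    have key : α * (1 - 2 * c * σstarSq) = c := by linear_combination (-1 : ℝ) * hcdα
    linarith [key]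
  -- the exponential process
  set N : ℕ → Ω → ℝ := fun n ω =>
    Real.exp (c * ∑ k ∈ Finset.range n, ((η (k+1) ω) ^ 2 - (σ k ω) ^ 2 - α * (σ k ω) ^ 4))
    with hN_def
  have hNpos : ∀ n ω, 0 < N n ω := fun n ω => Real.exp_pos _
  have hYeq : ∀ n ω, Mt n ω - α / 2 * QMt n ω
      = ∑ k ∈ Finset.range n, ((η (k+1) ω) ^ 2 - (σ k ω) ^ 2 - α * (σ k ω) ^ 4) := by
    intro n ω
    rw [hMt, hQMt, Finset.mul_sum, ← Finset.sum_sub_distrib]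
    exact Finset.sum_congr rfl fun k _ => by ring
  -- adaptedness
  have hNadp : StronglyAdapted ℱ N := by
    intro n
    refine Real.continuous_exp.comp_stronglyMeasurable (StronglyMeasurable.const_mul ?_ c)
    refine Finset.stronglyMeasurable_fun_sum _ fun k hk => ?_
    have hk' : k + 1 ≤ n := Finset.mem_range.1 hk
    exact ((((hη (k+1)).mono (ℱ.mono hk')).pow 2).sub
      (((hσ k).mono (ℱ.mono (by omega))).pow 2)).sub
      ((((hσ k).mono (ℱ.mono (by omega))).pow 4).const_mul α)
  -- conditional mgf
  set E : ℕ → Ω → ℝ := fun k ω => Real.exp (c * (η (k+1) ω) ^ 2) with hE_def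
  have hGc : ∀ k, μ[E k|ℱ k] =ᵐ[μ] fun ω => (1 - 2 * c * (σ k ω) ^ 2) ^ (-(1:ℝ)/2) :=
    fun k => hGauss k c hc1
  have hbase : ∀ k, ∀ᵐ ω ∂μ, 0 < 1 - 2 * c * (σ k ω) ^ 2 ∧
      1 - 2 * c * σstarSq ≤ 1 - 2 * c * (σ k ω) ^ 2 := by
    intro k
    filter_upwards [hbdd k] with ω hb
    constructor <;> nlinarith [hc]
  have hEint : ∀ k, Integrable (E k) μ := by
    intro k
    by_contra h
    have h0 : μ[E k|ℱ k] = 0 := condExp_of_not_integrable h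
    have := (hGc k).symm
    rw [h0] at this
    obtain ⟨ω, h1, h2⟩ := (this.and (hbase k)).exists
    have hpos : (0:ℝ) < (1 - 2 * c * (σ k ω) ^ 2) ^ (-(1:ℝ)/2) := Real.rpow_pos_of_pos h2.1 _
    have h1' : (1 - 2 * c * (σ k ω) ^ 2) ^ (-(1:ℝ)/2) = 0 := by simpa using h1
    exact hpos.ne' h1'
  have hE0 : ∀ k ω, 0 ≤ E k ω := fun k ω => (Real.exp_pos _).le
  set C : ℝ := (1 - 2 * c * σstarSq) ^ (-(1:ℝ)/2) with hC_def
  have hcond_le : ∀ k, μ[E k|ℱ k] ≤ᵐ[μ] fun _ => C := by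
    intro k
    filter_upwards [hGc k, hbase k] with ω h1 h2
    rw [h1]
    exact Real.rpow_le_rpow_of_nonpos (by linarith [hc1]) h2.2 (by norm_num)
  -- the multiplicative decomposition
  set Z : ℕ → Ω → ℝ := fun n ω =>
    N n ω * Real.exp (-(c * ((σ n ω) ^ 2 + α * ((σ n ω) ^ 2) ^ 2))) with hZ_def
  have hNsucc : ∀ n ω, N (n+1) ω = Z n ω * E n ω := by
    intro n ω
    simp only [hN_def, hZ_def, hE_def]
    rw [Finset.sum_range_succ, ← Real.exp_add, ← Real.exp_add]
    congr 1
    ring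
  have hZm : ∀ n, StronglyMeasurable[ℱ n] (Z n) := by
    intro n
    refine (hNadp n).mul ?_
    refine Real.continuous_exp.comp_stronglyMeasurable ?_
    exact ((((hσ n).pow 2).add (((hσ n).pow 2).pow 2 |>.const_mul α)).const_mul c).neg
  have hZ0 : ∀ n ω, 0 ≤ Z n ω := fun n ω =>
    mul_nonneg (hNpos n ω).le (Real.exp_pos _).le
  -- integrability by induction
  have hNint : ∀ n, Integrable (N n) μ := by
    intro n
    induction n with
    | zero =>
      have : N 0 = fun _ => (1:ℝ) := by
        funext ω; simp [hN_def]
      rw [this]; exact integrable_const 1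
    | succ n ih =>
      have hZint : Integrable (Z n) μ := by
        have hb : ∃ B, ∀ ω, ‖Real.exp (-(c * ((σ n ω) ^ 2 + α * ((σ n ω) ^ 2) ^ 2)))‖ ≤ B := by
          refine ⟨1, fun ω => ?_⟩
          rw [Real.norm_eq_abs, abs_of_pos (Real.exp_pos _), Real.exp_le_one_iff]
          have : 0 ≤ (σ n ω) ^ 2 + α * ((σ n ω) ^ 2) ^ 2 := by positivity
          nlinarith [hc]
        have := ih.bdd_mul
          (Real.continuous_exp.comp_stronglyMeasurable
            (((((hσ n).pow 2).add (((hσ n).pow 2).pow 2 |>.const_mul α)).const_mul c).neg)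
            |>.mono (ℱ.le n)).aestronglyMeasurable (ae_of_all _ hb.choose_spec)
        simpa [hZ_def, mul_comm] using this
      have := aux_integrable_mul (ℱ.le n) (hZm n) (hZ0 n) hZint (hE0 n) (hEint n) (hcond_le n)
      have heq : N (n+1) = fun ω => Z n ω * E n ω := funext (hNsucc n)
      rw [heq]
      exact this
  -- supermartingale step
  have hstep : ∀ n, μ[N (n+1)|ℱ n] ≤ᵐ[μ] N n := by
    intro n
    have heq : N (n+1) = fun ω => Z n ω * E n ω := funext (hNsucc n)
    have hmul : μ[fun ω => Z n ω * E n ω|ℱ n] =ᵐ[μ] fun ω => Z n ω * (μ[E n|ℱ n]) ω := by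
      have := condExp_mul_of_stronglyMeasurable_left (hZm n)
        (by rw [← Pi.mul_def, ← heq] at *; exact (heq ▸ hNint (n+1) : Integrable _ μ))
        (hEint n)
      simpa [Pi.mul_def] using this
    rw [heq]
    refine hmul.le.trans ?_
    filter_upwards [hGc n, hbdd n] with ω h1 h2
    rw [h1]
    have hkey := aux_key (s := (σ n ω) ^ 2) hc hα (sq_nonneg _) h2 hc1 hcα
    calc Z n ω * (1 - 2 * c * (σ n ω) ^ 2) ^ (-(1:ℝ)/2)
        = N n ω * (Real.exp (-(c * ((σ n ω) ^ 2 + α * ((σ n ω) ^ 2) ^ 2)))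
            * (1 - 2 * c * (σ n ω) ^ 2) ^ (-(1:ℝ)/2)) := by rw [hZ_def]; ring
      _ ≤ N n ω * 1 := mul_le_mul_of_nonneg_left hkey (hNpos n ω).le
      _ = N n ω := mul_one _
  have hNsup : Supermartingale N ℱ μ := supermartingale_nat hNadp hNint hstep
  -- Doob-type maximal bound via hitting times
  set ε : ℝ := Real.exp (c * β) with hε_def
  have hε : 0 < ε := Real.exp_pos _
  have hN0 : ∫ ω, N 0 ω ∂μ = 1 := by
    have : N 0 = fun _ => (1:ℝ) := by funext ω; simp [hN_def]
    rw [this]; simp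
  set A : ℕ → Set Ω := fun n => {ω | β ≤ Mt n ω - α / 2 * QMt n ω} with hA_def
  have hmain : ∀ n, μ (Set.accumulate A n) ≤ ENNReal.ofReal (Real.exp (-(c * β))) := by
    intro n
    set τ : Ω → WithTop ℕ := fun ω => ((hittingBtwn N {y : ℝ | ε ≤ y} 0 n ω : ℕ) : WithTop ℕ) with hτ_def
    have hτ : IsStoppingTime ℱ τ := hNadp.adapted.isStoppingTime_hittingBtwn measurableSet_Ici
    have hτle : ∀ ω, τ ω ≤ n := fun ω => WithTop.coe_le_coe.2 (hittingBtwn_le ω)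
    have hSVint : Integrable (stoppedValue N τ) μ :=
      integrable_stoppedValue ℕ hτ hNint hτle
    have hSVnonneg : 0 ≤ᵐ[μ] stoppedValue N τ :=
      Filter.Eventually.of_forall fun ω => (hNpos _ ω).le
    -- expected stopped value ≤ ∫ N 0 = 1
    have hSVle : ∫ ω, stoppedValue N τ ω ∂μ ≤ 1 := by
      have hmono := hNsup.neg.expected_stoppedValue_mono (isStoppingTime_const ℱ 0) hτ
        (fun ω => WithTop.coe_le_coe.2 (Nat.zero_le _)) hτle
      have h1 : stoppedValue (-N) (fun _ => WithTop.some (0:ℕ)) = fun ω => -(N 0 ω) := by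
        funext ω; simp [stoppedValue]
      have h2 : stoppedValue (-N) τ = fun ω => -(stoppedValue N τ ω) := by
        funext ω; simp [stoppedValue]
      rw [h1, h2, integral_neg, integral_neg, neg_le_neg_iff, hN0] at hmono
      exact hmono
    -- Markov
    have hmarkov := mul_meas_ge_le_integral_of_nonneg hSVnonneg hSVint ε
    have htoReal : (μ {ω | ε ≤ stoppedValue N τ ω}).toReal ≤ Real.exp (-(c * β)) := by
      have hεe : ε * Real.exp (-(c * β)) = 1 := by
        rw [hε_def, ← Real.exp_add]; simp
      have h3 : ε * (μ {ω | ε ≤ stoppedValue N τ ω}).toReal ≤ ε * Real.exp (-(c * β)) := by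
        rw [hεe]; exact hmarkov.trans hSVle
      exact le_of_mul_le_mul_left h3 hε
    have hG : μ {ω | ε ≤ stoppedValue N τ ω} ≤ ENNReal.ofReal (Real.exp (-(c * β))) := by
      rw [← ENNReal.ofReal_toReal (measure_ne_top μ _)]
      exact ENNReal.ofReal_le_ofReal htoReal
    refine le_trans (measure_mono ?_) hG
    intro ω hω
    rw [Set.mem_accumulate] at hω
    obtain ⟨k, hkn, hk⟩ := hω
    have hNk : ε ≤ N k ω := by
      rw [hε_def, hN_def, Real.exp_le_exp]
      have := hYeq k ω
      rw [hA_def] at hk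
      simp only [Set.mem_setOf_eq] at hk
      rw [this] at hk
      exact mul_le_mul_of_nonneg_left hk hc.le
    exact stoppedValue_hittingBtwn_mem ⟨k, ⟨Nat.zero_le _, hkn⟩, hNk⟩
  -- conclude
  have hset : {ω | ∃ n, β ≤ Mt n ω - α / 2 * QMt n ω} = ⋃ n, A n := by
    ext ω; simp [hA_def]
  have hexp : β / (2 * σstarSq + 1 / α) = c * β := by
    have hcinv : c = (2 * σstarSq + 1 / α)⁻¹ := eq_inv_of_mul_eq_one_left hcd
    rw [div_eq_mul_inv, ← hcinv, mul_comm]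
  rw [hset, hexp, measure_iUnion_eq_iSup_accumulate]
  exact iSup_le hmain
end

section
/- Let f : ℝ^m → ℝ^m and suppose ⟨f(x), x⟩ ≤ α − β|x|² for all x and constants α, β > 0. Fix τ ∈ (0, 2β) and set α̃ = α + τ/2, β̃ = β − τ/2. If x* = x + Δ·f(x) with Δ > 0 and |f(x*) − f(x)| ≤ τ, then |x*|² ≤ |x|² + 2Δ(α̃ − β̃|x*|²). -/
open RealInnerProductSpace

section

variable {E : Type*} [NormedAddCommGroup E] [InnerProductSpace ℝ E]

theorem real_inner_le_sq_add_sq_div_two (x y : E) : ⟪x, y⟫ ≤ (‖x‖ ^ 2 + ‖y‖ ^ 2) / 2 := by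
  nlinarith [norm_sub_sq_real x y, sq_nonneg ‖x - y‖]

theorem norm_sq_le_of_eq_add_smul {x y v : E} {Δ c : ℝ} (hΔ : 0 ≤ Δ) (hy : y = x + Δ • v)
    (hv : ⟪v, y⟫ ≤ c) : ‖y‖ ^ 2 ≤ ‖x‖ ^ 2 + 2 * Δ * c := by
  have henergy : ‖y‖ ^ 2 = ⟪x, y⟫ + Δ * ⟪v, y⟫ :=
    calc ‖y‖ ^ 2 = ⟪x + Δ • v, y⟫ := by rw [← hy, real_inner_self_eq_norm_sq]
      _ = ⟪x, y⟫ + Δ * ⟪v, y⟫ := by rw [inner_add_left, real_inner_smul_left]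
  nlinarith [real_inner_le_sq_add_sq_div_two x y, mul_le_mul_of_nonneg_left hv hΔ]

/-- The perturbation term `τ ‖y‖ ≤ τ (1 + ‖y‖²) / 2` is absorbed into the constants. -/
theorem real_inner_le_of_norm_sub_le {u v y : E} {α β τ : ℝ}
    (hu : ⟪u, y⟫ ≤ α - β * ‖y‖ ^ 2) (hvu : ‖u - v‖ ≤ τ) :
    ⟪v, y⟫ ≤ (α + τ / 2) - (β - τ / 2) * ‖y‖ ^ 2 := by
  have hsplit : ⟪v, y⟫ = ⟪u, y⟫ + ⟪v - u, y⟫ := by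
    rw [inner_sub_left]; ring
  have hpert : ⟪v - u, y⟫ ≤ τ * ‖y‖ :=
    (real_inner_le_norm _ _).trans <|
      mul_le_mul_of_nonneg_right (by rwa [norm_sub_rev]) (norm_nonneg y)
  have hτ : 0 ≤ τ := (norm_nonneg _).trans hvu
  nlinarith [mul_nonneg hτ (sq_nonneg (‖y‖ - 1))]

end

theorem half_step_dissipativity_general {m : ℕ}
    (f : EuclideanSpace ℝ (Fin m) → EuclideanSpace ℝ (Fin m))
    (α β τ Δ : ℝ)
    (hΔ : 0 < Δ)
    (hcoerce : ∀ y, ⟪f y, y⟫ ≤ α - β * ‖y‖ ^ 2)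
    (x xstar : EuclideanSpace ℝ (Fin m))
    (hxstar : xstar = x + Δ • f x)
    (herr : ‖f xstar - f x‖ ≤ τ) :
    ‖xstar‖ ^ 2 ≤ ‖x‖ ^ 2 + 2 * Δ * ((α + τ / 2) - (β - τ / 2) * ‖xstar‖ ^ 2) :=
  norm_sq_le_of_eq_add_smul hΔ.le hxstar (real_inner_le_of_norm_sub_le (hcoerce xstar) herr)

/-- Dissipativity estimate for the adaptive Euler half-step: if `f` satisfies
the coercivity condition `⟪f(x), x⟫ ≤ α - β‖x‖²`, `τ ∈ (0, 2β)`,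
`x* = x + Δ f(x)` with `Δ > 0` and the error control `‖f(x*) - f(x)‖ ≤ τ`
holds, then `‖x*‖² ≤ ‖x‖² + 2Δ(α̃ - β̃‖x*‖²)` with `α̃ = α + τ/2`,
`β̃ = β - τ/2`. -/
theorem half_step_dissipativity {m : ℕ}
    (f : EuclideanSpace ℝ (Fin m) → EuclideanSpace ℝ (Fin m))
    (α β τ Δ : ℝ) (hα : 0 < α) (hβ : 0 < β) (hτ : 0 < τ) (hτβ : τ < 2 * β)
    (hΔ : 0 < Δ)
    (hcoerce : ∀ y, ⟪f y, y⟫ ≤ α - β * ‖y‖ ^ 2)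
    (x xstar : EuclideanSpace ℝ (Fin m))
    (hxstar : xstar = x + Δ • f x)
    (herr : ‖f xstar - f x‖ ≤ τ) :
    ‖xstar‖ ^ 2 ≤ ‖x‖ ^ 2 + 2 * Δ * ((α + τ / 2) - (β - τ / 2) * ‖xstar‖ ^ 2) :=
  half_step_dissipativity_general f α β τ Δ hΔ hcoerce x xstar hxstar herr
end

section
/- Suppose a nonnegative sequence (a_n) satisfies a_{n+1} ≤ β_n a_n + κ_n + m_{n+1} where β_n = 1/(1+2β̃Δ_n) with Δ_n ∈ (0, Δ_max], κ_n = Δ_n C, and the m_{n+1} are martingale differences with respect to a filtration (F_n) (i.e. E[m_{n+1}|F_n] = 0). Let N_0 < N_1 be stopping times with Σ_{l=N_0}^{N_1−1} Δ_l ∈ [δ, δ + Δ_max]. Suppose γ⁻ > 0 satisfies (1+t)^{−1} ≤ e^{−γ⁻t} for all t ∈ [0, 2β̃Δ_max]. Then E[a_{N_1} | F_{N_0}] ≤ exp(−2γ⁻β̃δ)·a_{N_0} + exp(2β̃(δ+Δ_max))·C·(δ+Δ_max). -/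
open MeasureTheory

/-- Discrete Foster–Lyapunov drift estimate over a random number of adaptive
steps between two stopping times `N0 < N1` whose elapsed (adaptive) time
`∑ Δ_l` lies in `[δ, δ + Δmax]`. -/
theorem foster_lyapunov_drift
    {Ω : Type*} {mΩ : MeasurableSpace Ω} {μ : Measure Ω} [IsProbabilityMeasure μ]
    (ℱ : Filtration ℕ mΩ) (a Δ martdiff : ℕ → Ω → ℝ)
    (βt δ Δmax C γ : ℝ)
    (hβt : 0 < βt) (hδ : 0 < δ) (hΔmax : 0 < Δmax) (hC : 0 < C) (hγ : 0 < γ)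
    (hγineq : ∀ t ∈ Set.Icc (0:ℝ) (2 * βt * Δmax), (1 + t)⁻¹ ≤ Real.exp (-(γ * t)))
    (ha_nonneg : ∀ n ω, 0 ≤ a n ω)
    (hΔpos : ∀ n ω, 0 < Δ n ω) (hΔle : ∀ n ω, Δ n ω ≤ Δmax)
    (hΔmeas : ∀ n, StronglyMeasurable[ℱ n] (Δ n))
    (hameas : ∀ n, StronglyMeasurable[ℱ n] (a n))
    (haint : ∀ n, Integrable (a n) μ)
    (hmint : ∀ n, Integrable (martdiff n) μ)
    (hmart : ∀ n, μ[martdiff (n+1) | ℱ n] =ᵐ[μ] 0)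
    (hrec : ∀ n ω, a (n+1) ω
        ≤ (1 + 2 * βt * Δ n ω)⁻¹ * a n ω + Δ n ω * C + martdiff (n+1) ω)
    (N0 N1 : Ω → ℕ) (hN0 : IsStoppingTime ℱ (fun ω => (N0 ω : WithTop ℕ))) (hN1 : IsStoppingTime ℱ (fun ω => (N1 ω : WithTop ℕ)))
    (hlt : ∀ ω, N0 ω < N1 ω)
    (hsum : ∀ ω, (∑ l ∈ Finset.Ico (N0 ω) (N1 ω), Δ l ω) ∈ Set.Icc δ (δ + Δmax))
    (hintN1 : Integrable (fun ω => a (N1 ω) ω) μ) :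
    ∀ᵐ ω ∂μ,
      (μ[fun ω' => a (N1 ω') ω' | hN0.measurableSpace]) ω
        ≤ Real.exp (-(2 * γ * βt * δ)) * a (N0 ω) ω
          + Real.exp (2 * βt * (δ + Δmax)) * C * (δ + Δmax) := by
  classical
  set W : ℝ := Real.exp (2 * βt * (δ + Δmax)) with hW
  set E : ℝ := Real.exp (2 * γ * βt * δ) with hE
  have hWpos : 0 < W := Real.exp_pos _
  have hEpos : 0 < E := Real.exp_pos _
  have hE1 : 1 ≤ E := Real.one_le_exp (by positivity)
  set Γ : ℕ → Ω → ℝ := fun k ω => ∏ l ∈ Finset.range k, (1 + 2 * βt * Δ l ω) with hΓ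
  have hfac_pos : ∀ l ω, (0:ℝ) < 1 + 2 * βt * Δ l ω := fun l ω => by
    have := hΔpos l ω; positivity
  have hΓpos : ∀ k ω, 0 < Γ k ω := fun k ω =>
    Finset.prod_pos fun l _ => hfac_pos l ω
  -- ratio formula
  have hΓratio : ∀ ω {n k : ℕ}, n ≤ k →
      Γ k ω = Γ n ω * ∏ l ∈ Finset.Ico n k, (1 + 2 * βt * Δ l ω) := by
    intro ω n k hnk
    rw [hΓ]
    exact (Finset.prod_range_mul_prod_Ico _ hnk).symm
  -- upper bound on ratio within [N0, N1)
  have hΓupper : ∀ ω {j : ℕ}, N0 ω ≤ j → j < N1 ω →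
      Γ (j+1) ω ≤ W * Γ (N0 ω) ω := by
    intro ω j hj1 hj2
    have h1 : Γ (j+1) ω = Γ (N0 ω) ω * ∏ l ∈ Finset.Ico (N0 ω) (j+1), (1 + 2 * βt * Δ l ω) :=
      hΓratio ω (by omega)
    have h2 : ∏ l ∈ Finset.Ico (N0 ω) (j+1), (1 + 2 * βt * Δ l ω)
        ≤ ∏ l ∈ Finset.Ico (N0 ω) (j+1), Real.exp (2 * βt * Δ l ω) := by
      apply Finset.prod_le_prod
      · intro l _; exact le_of_lt (hfac_pos l ω)
      · intro l _
        have := Real.add_one_le_exp (2 * βt * Δ l ω)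
        linarith
    have h3 : ∏ l ∈ Finset.Ico (N0 ω) (j+1), Real.exp (2 * βt * Δ l ω)
        = Real.exp (∑ l ∈ Finset.Ico (N0 ω) (j+1), 2 * βt * Δ l ω) :=
      (Real.exp_sum _ _).symm
    have h4 : ∑ l ∈ Finset.Ico (N0 ω) (j+1), 2 * βt * Δ l ω ≤ 2 * βt * (δ + Δmax) := by
      have hsub : Finset.Ico (N0 ω) (j+1) ⊆ Finset.Ico (N0 ω) (N1 ω) := by
        apply Finset.Ico_subset_Ico le_rfl; omega
      have hle1 : ∑ l ∈ Finset.Ico (N0 ω) (j+1), 2 * βt * Δ l ω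
          ≤ ∑ l ∈ Finset.Ico (N0 ω) (N1 ω), 2 * βt * Δ l ω := by
        apply Finset.sum_le_sum_of_subset_of_nonneg hsub
        intro l _ _
        have := hΔpos l ω; positivity
      have hle2 : ∑ l ∈ Finset.Ico (N0 ω) (N1 ω), 2 * βt * Δ l ω
          = 2 * βt * ∑ l ∈ Finset.Ico (N0 ω) (N1 ω), Δ l ω := by
        rw [Finset.mul_sum]
      have := (hsum ω).2
      rw [hle2] at hle1
      calc ∑ l ∈ Finset.Ico (N0 ω) (j+1), 2 * βt * Δ l ω
          ≤ 2 * βt * ∑ l ∈ Finset.Ico (N0 ω) (N1 ω), Δ l ω := hle1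
        _ ≤ 2 * βt * (δ + Δmax) := by nlinarith
    calc Γ (j+1) ω = Γ (N0 ω) ω * ∏ l ∈ Finset.Ico (N0 ω) (j+1), (1 + 2 * βt * Δ l ω) := h1
      _ ≤ Γ (N0 ω) ω * Real.exp (2 * βt * (δ + Δmax)) := by
          have := (h2.trans (le_of_eq h3)).trans (Real.exp_le_exp.2 h4)
          exact mul_le_mul_of_nonneg_left this (le_of_lt (hΓpos _ ω))
      _ = W * Γ (N0 ω) ω := by rw [hW]; ring
  -- lower bound on Γ (N1 ω) vs Γ (N0 ω)
  have hΓlower : ∀ ω, E * Γ (N0 ω) ω ≤ Γ (N1 ω) ω := by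
    intro ω
    have h1 : Γ (N1 ω) ω = Γ (N0 ω) ω * ∏ l ∈ Finset.Ico (N0 ω) (N1 ω), (1 + 2 * βt * Δ l ω) :=
      hΓratio ω (le_of_lt (hlt ω))
    have h2 : ∀ l, Real.exp (γ * (2 * βt * Δ l ω)) ≤ 1 + 2 * βt * Δ l ω := by
      intro l
      have ht : 2 * βt * Δ l ω ∈ Set.Icc (0:ℝ) (2 * βt * Δmax) := by
        constructor
        · have := hΔpos l ω; positivity
        · have := hΔle l ω; nlinarith
      have := hγineq _ ht
      have hpos : (0:ℝ) < 1 + 2 * βt * Δ l ω := hfac_pos l ω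
      rw [Real.exp_neg] at this
      exact (inv_le_inv₀ hpos (Real.exp_pos _)).mp this
    have h3 : Real.exp (∑ l ∈ Finset.Ico (N0 ω) (N1 ω), γ * (2 * βt * Δ l ω))
        ≤ ∏ l ∈ Finset.Ico (N0 ω) (N1 ω), (1 + 2 * βt * Δ l ω) := by
      rw [Real.exp_sum]
      apply Finset.prod_le_prod
      · intro l _; exact le_of_lt (Real.exp_pos _)
      · intro l _; exact h2 l
    have h4 : 2 * γ * βt * δ ≤ ∑ l ∈ Finset.Ico (N0 ω) (N1 ω), γ * (2 * βt * Δ l ω) := by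
      have : ∑ l ∈ Finset.Ico (N0 ω) (N1 ω), γ * (2 * βt * Δ l ω)
          = γ * 2 * βt * ∑ l ∈ Finset.Ico (N0 ω) (N1 ω), Δ l ω := by
        rw [Finset.mul_sum]; apply Finset.sum_congr rfl; intro l _; ring
      rw [this]
      have h5 := (hsum ω).1
      have h6 : 0 < γ * 2 * βt := by positivity
      nlinarith [mul_le_mul_of_nonneg_left h5 (le_of_lt h6)]
    calc E * Γ (N0 ω) ω
        ≤ Real.exp (∑ l ∈ Finset.Ico (N0 ω) (N1 ω), γ * (2 * βt * Δ l ω)) * Γ (N0 ω) ω := by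
          apply mul_le_mul_of_nonneg_right _ (le_of_lt (hΓpos _ ω))
          rw [hE]; exact Real.exp_le_exp.2 h4
      _ ≤ (∏ l ∈ Finset.Ico (N0 ω) (N1 ω), (1 + 2 * βt * Δ l ω)) * Γ (N0 ω) ω :=
          mul_le_mul_of_nonneg_right h3 (le_of_lt (hΓpos _ ω))
      _ = Γ (N1 ω) ω := by rw [h1]; ring
  -- telescoping
  have htele : ∀ ω (n k : ℕ), n ≤ k →
      Γ k ω * a k ω ≤ Γ n ω * a n ω
        + ∑ l ∈ Finset.Ico n k, Γ (l+1) ω * (Δ l ω * C + martdiff (l+1) ω) := by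
    intro ω n k hnk
    induction k, hnk using Nat.le_induction with
    | base => simp
    | succ k hnk ih =>
      have hstep : Γ (k+1) ω * a (k+1) ω
          ≤ Γ k ω * a k ω + Γ (k+1) ω * (Δ k ω * C + martdiff (k+1) ω) := by
        have h1 := hrec k ω
        have h2 : Γ (k+1) ω = Γ k ω * (1 + 2 * βt * Δ k ω) := Finset.prod_range_succ _ _
        have hpos := hΓpos (k+1) ω
        have hfpos := hfac_pos k ω
        have h3 : Γ (k+1) ω * a (k+1) ω
            ≤ Γ (k+1) ω * ((1 + 2 * βt * Δ k ω)⁻¹ * a k ω + Δ k ω * C + martdiff (k+1) ω) :=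
          mul_le_mul_of_nonneg_left h1 (le_of_lt hpos)
        have h4 : Γ (k+1) ω * ((1 + 2 * βt * Δ k ω)⁻¹ * a k ω)
            = Γ k ω * a k ω := by
          rw [h2]
          field_simp
        calc Γ (k+1) ω * a (k+1) ω
            ≤ Γ (k+1) ω * ((1 + 2 * βt * Δ k ω)⁻¹ * a k ω + Δ k ω * C + martdiff (k+1) ω) := h3
          _ = Γ (k+1) ω * ((1 + 2 * βt * Δ k ω)⁻¹ * a k ω)
              + Γ (k+1) ω * (Δ k ω * C + martdiff (k+1) ω) := by ring
          _ = Γ k ω * a k ω + Γ (k+1) ω * (Δ k ω * C + martdiff (k+1) ω) := by rw [h4]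
      calc Γ (k+1) ω * a (k+1) ω
          ≤ Γ k ω * a k ω + Γ (k+1) ω * (Δ k ω * C + martdiff (k+1) ω) := hstep
        _ ≤ Γ n ω * a n ω + ∑ l ∈ Finset.Ico n k, Γ (l+1) ω * (Δ l ω * C + martdiff (l+1) ω)
            + Γ (k+1) ω * (Δ k ω * C + martdiff (k+1) ω) := by linarith [ih]
        _ = Γ n ω * a n ω
            + ∑ l ∈ Finset.Ico n (k+1), Γ (l+1) ω * (Δ l ω * C + martdiff (l+1) ω) := by
            rw [Finset.sum_Ico_succ_top hnk]; ring

  -- normalized telescoping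
  have hkey : ∀ ω (n k : ℕ), n ≤ k →
      Γ k ω / Γ n ω * a k ω ≤ a n ω
        + ∑ l ∈ Finset.Ico n k, Γ (l+1) ω / Γ n ω * (Δ l ω * C + martdiff (l+1) ω) := by
    intro ω n k hnk
    have h := htele ω n k hnk
    have hpos := hΓpos n ω
    have h2 : Γ k ω / Γ n ω * a k ω = (Γ k ω * a k ω) / Γ n ω := by ring
    have h3 : (Γ k ω * a k ω) / Γ n ω
        ≤ (Γ n ω * a n ω
          + ∑ l ∈ Finset.Ico n k, Γ (l+1) ω * (Δ l ω * C + martdiff (l+1) ω)) / Γ n ω := by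
      gcongr
    have h4 : (Γ n ω * a n ω
          + ∑ l ∈ Finset.Ico n k, Γ (l+1) ω * (Δ l ω * C + martdiff (l+1) ω)) / Γ n ω
        = a n ω + ∑ l ∈ Finset.Ico n k, Γ (l+1) ω / Γ n ω * (Δ l ω * C + martdiff (l+1) ω) := by
      rw [add_div, mul_div_cancel_left₀ _ (ne_of_gt hpos), Finset.sum_div]
      congr 1
      exact Finset.sum_congr rfl fun l _ => by ring
    rw [h2]
    rw [h4] at h3
    exact h3
  -- sum over ite equals sum over Ico
  have hfilt : ∀ (n N K : ℕ) (f : ℕ → ℝ),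
      (∑ l ∈ Finset.range K, if n ≤ l ∧ l < N then f l else 0)
        = ∑ l ∈ Finset.Ico n (min N K), f l := by
    intro n N K f
    rw [← Finset.sum_filter]
    congr 1
    ext l
    simp only [Finset.mem_filter, Finset.mem_range, Finset.mem_Ico, lt_min_iff]
    omega
  set MK : ℕ → Ω → ℝ := fun K ω => ∑ l ∈ Finset.range K,
    if N0 ω ≤ l ∧ l < N1 ω then Γ (l+1) ω / Γ (N0 ω) ω * martdiff (l+1) ω else 0 with hMKdef
  have hWC : (0:ℝ) < W * C * (δ + Δmax) := by
    have : (0:ℝ) < δ + Δmax := by linarith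
    exact mul_pos (mul_pos hWpos hC) this
  -- pathwise key inequality
  have hpath : ∀ (K : ℕ) ω, (if N1 ω ≤ K then E * a (N1 ω) ω else 0)
      ≤ a (N0 ω) ω + W * C * (δ + Δmax) + MK K ω := by
    intro K ω
    have hMK : MK K ω = ∑ l ∈ Finset.Ico (N0 ω) (min (N1 ω) K),
        Γ (l+1) ω / Γ (N0 ω) ω * martdiff (l+1) ω :=
      hfilt (N0 ω) (N1 ω) K _
    by_cases hKn : K ≤ N0 ω
    · have hk : min (N1 ω) K ≤ N0 ω := le_trans (min_le_right _ _) hKn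
      rw [hMK, Finset.Ico_eq_empty (by omega)]
      simp only [Finset.sum_empty, add_zero]
      have hnN : ¬ (N1 ω ≤ K) := by have := hlt ω; omega
      rw [if_neg hnN]
      have := ha_nonneg (N0 ω) ω
      linarith
    · push_neg at hKn
      set n := N0 ω with hn
      set N := N1 ω with hN
      set k := min N K with hkdef
      have hnk : n ≤ k := le_min (le_of_lt (hlt ω)) (le_of_lt hKn)
      have h := hkey ω n k hnk
      have hsplit : ∑ l ∈ Finset.Ico n k, Γ (l+1) ω / Γ n ω * (Δ l ω * C + martdiff (l+1) ω)
          = (∑ l ∈ Finset.Ico n k, Γ (l+1) ω / Γ n ω * (Δ l ω * C))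
            + ∑ l ∈ Finset.Ico n k, Γ (l+1) ω / Γ n ω * martdiff (l+1) ω := by
        rw [← Finset.sum_add_distrib]
        exact Finset.sum_congr rfl fun l _ => by ring
      have hD : ∑ l ∈ Finset.Ico n k, Γ (l+1) ω / Γ n ω * (Δ l ω * C)
          ≤ W * C * (δ + Δmax) := by
        have hterm : ∀ l ∈ Finset.Ico n k,
            Γ (l+1) ω / Γ n ω * (Δ l ω * C) ≤ W * (Δ l ω * C) := by
          intro l hl
          rw [Finset.mem_Ico] at hl
          have hlN : l < N := lt_of_lt_of_le hl.2 (min_le_left _ _)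
          have hup := hΓupper ω hl.1 hlN
          have hposn := hΓpos n ω
          have hratio : Γ (l+1) ω / Γ n ω ≤ W := by
            rw [div_le_iff₀ hposn]; linarith
          exact mul_le_mul_of_nonneg_right hratio
            (le_of_lt (mul_pos (hΔpos l ω) hC))
        calc ∑ l ∈ Finset.Ico n k, Γ (l+1) ω / Γ n ω * (Δ l ω * C)
            ≤ ∑ l ∈ Finset.Ico n k, W * (Δ l ω * C) := Finset.sum_le_sum hterm
          _ = W * C * ∑ l ∈ Finset.Ico n k, Δ l ω := by
              rw [Finset.mul_sum]
              exact Finset.sum_congr rfl fun l _ => by ring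
          _ ≤ W * C * (δ + Δmax) := by
              have hsub : Finset.Ico n k ⊆ Finset.Ico n N :=
                Finset.Ico_subset_Ico le_rfl (min_le_left _ _)
              have h1 : ∑ l ∈ Finset.Ico n k, Δ l ω ≤ ∑ l ∈ Finset.Ico n N, Δ l ω :=
                Finset.sum_le_sum_of_subset_of_nonneg hsub fun l _ _ => le_of_lt (hΔpos l ω)
              have h2 := (hsum ω).2
              have h3 : (0:ℝ) ≤ W * C := le_of_lt (mul_pos hWpos hC)
              nlinarith
      rw [hMK]
      by_cases hNK : N ≤ K
      · have hk : k = N := min_eq_left hNK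
        rw [if_pos hNK, hk]
        rw [hk] at h hsplit hD
        have hlow := hΓlower ω
        have hposn := hΓpos n ω
        have hEa : E * a N ω ≤ Γ N ω / Γ n ω * a N ω := by
          apply mul_le_mul_of_nonneg_right _ (ha_nonneg N ω)
          rw [le_div_iff₀ hposn]
          exact hlow
        linarith
      · push_neg at hNK
        have hk : k = K := min_eq_right (le_of_lt hNK)
        rw [if_neg (not_le.mpr hNK), hk]
        rw [hk] at h hsplit hD
        have hpos' : (0:ℝ) ≤ Γ K ω / Γ n ω * a K ω :=
          mul_nonneg (le_of_lt (div_pos (hΓpos K ω) (hΓpos n ω))) (ha_nonneg K ω)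
        linarith

  -- zero integral of bounded F_l-measurable weight times martingale difference
  have hzero : ∀ (l : ℕ) (ψ : Ω → ℝ), StronglyMeasurable[ℱ l] ψ → (∀ ω, |ψ ω| ≤ W) →
      ∫ ω, ψ ω * martdiff (l+1) ω ∂μ = 0 := by
    intro l ψ hψ hψb
    have hle := ℱ.le l
    have hψm : AEStronglyMeasurable ψ μ := (hψ.mono hle).aestronglyMeasurable
    have hint : Integrable (ψ * martdiff (l+1)) μ :=
      (hmint (l+1)).bdd_mul hψm (c := W) (Filter.Eventually.of_forall fun ω => by simpa using hψb ω)
    have hcm := condExp_mul_of_stronglyMeasurable_left hψ hint (hmint (l+1))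
    have h0 : μ[ψ * martdiff (l+1) | ℱ l] =ᵐ[μ] 0 := by
      refine hcm.trans ?_
      filter_upwards [hmart l] with ω hω
      simp only [Pi.mul_apply, Pi.zero_apply] at hω ⊢
      rw [hω, mul_zero]
    have := integral_condExp hle (f := ψ * martdiff (l+1)) (μ := μ)
    rw [integral_congr_ae h0] at this
    simpa using this.symm
  -- the summand processes
  set T : ℕ → Ω → ℝ := fun l ω =>
    if N0 ω ≤ l ∧ l < N1 ω then Γ (l+1) ω / Γ (N0 ω) ω * martdiff (l+1) ω else 0 with hT
  have hMKT : ∀ K ω, MK K ω = ∑ l ∈ Finset.range K, T l ω := fun _ _ => rfl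
  set B : ℕ → ℕ → Set Ω := fun j l => {ω | N0 ω = j} ∩ {ω | l < N1 ω} with hB
  have hBmeas : ∀ j l, j ≤ l → MeasurableSet[ℱ l] (B j l) := by
    intro j l hjl
    have h1 := hN0.measurableSet_eq_of_countable j
    have h2 := hN1.measurableSet_gt l
    have e1 : {ω | N0 ω = j} = {ω | (N0 ω : WithTop ℕ) = (j : WithTop ℕ)} := by ext ω; simp
    have e2 : {ω | l < N1 ω} = {ω | (l : WithTop ℕ) < (N1 ω : WithTop ℕ)} := by ext ω; simp
    show MeasurableSet[ℱ l] ({ω | N0 ω = j} ∩ {ω | l < N1 ω})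
    rw [e1, e2]
    exact (ℱ.mono hjl _ h1).inter h2
  -- decomposition of an indicator of T into finitely many pieces
  have hdecomp : ∀ (l : ℕ) (t : Set Ω) (ω : Ω),
      t.indicator (T l) ω = ∑ j ∈ Finset.range (l+1),
        ((t ∩ B j l).indicator (fun ω' => Γ (l+1) ω' / Γ j ω')) ω * martdiff (l+1) ω := by
    intro l t ω
    by_cases hts : ω ∈ t
    · rw [Set.indicator_of_mem hts]
      by_cases hc : N0 ω ≤ l ∧ l < N1 ω
      · rw [hT]
        simp only [if_pos hc]
        rw [Finset.sum_eq_single (N0 ω)]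
        · have hmem : ω ∈ t ∩ B (N0 ω) l := ⟨hts, rfl, hc.2⟩
          rw [Set.indicator_of_mem hmem]
        · intro j hj hne
          have hnmem : ω ∉ t ∩ B j l := by
            rintro ⟨-, hj1, -⟩
            exact hne (by rw [← hj1])
          rw [Set.indicator_of_notMem hnmem, zero_mul]
        · intro hmem
          exact absurd (Finset.mem_range.mpr (by omega)) hmem
      · rw [hT]
        simp only [if_neg hc]
        symm
        apply Finset.sum_eq_zero
        intro j hj
        rw [Finset.mem_range] at hj
        have hnmem : ω ∉ t ∩ B j l := by
          rintro ⟨-, hj1, hj2⟩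
          have hj1' : N0 ω = j := hj1
          exact hc ⟨by omega, hj2⟩
        rw [Set.indicator_of_notMem hnmem, zero_mul]
    · rw [Set.indicator_of_notMem hts]
      symm
      apply Finset.sum_eq_zero
      intro j hj
      have hnmem : ω ∉ t ∩ B j l := fun h => hts h.1
      rw [Set.indicator_of_notMem hnmem, zero_mul]
  -- each piece is bounded, F_l-measurable
  have hpiece : ∀ (l j : ℕ), j ≤ l → ∀ (t : Set Ω), MeasurableSet[ℱ l] t →
      StronglyMeasurable[ℱ l] ((t ∩ B j l).indicator (fun ω' => Γ (l+1) ω' / Γ j ω'))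
      ∧ (∀ ω, |((t ∩ B j l).indicator (fun ω' => Γ (l+1) ω' / Γ j ω')) ω| ≤ W) := by
    intro l j hjl t ht
    have hΓm : ∀ (k : ℕ), k ≤ l + 1 → StronglyMeasurable[ℱ l] (fun ω => Γ k ω) := by
      intro k hk
      apply Finset.stronglyMeasurable_fun_prod
      intro i hi
      rw [Finset.mem_range] at hi
      have : i ≤ l := by omega
      exact stronglyMeasurable_const.add
        (stronglyMeasurable_const.mul ((hΔmeas i).mono (ℱ.mono this)))
    constructor
    · exact (((hΓm (l+1) le_rfl).measurable.div (hΓm j (by omega)).measurable).stronglyMeasurable).indicator (ht.inter (hBmeas j l hjl))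
    · intro ω
      by_cases hmem : ω ∈ t ∩ B j l
      · rw [Set.indicator_of_mem hmem]
        obtain ⟨-, hj1, hj2⟩ := hmem
        have hj1' : N0 ω = j := hj1
        have hup := hΓupper ω (j := l) (by omega) hj2
        rw [hj1'] at hup
        have hpos := hΓpos j ω
        have h1 : Γ (l+1) ω / Γ j ω ≤ W := by
          rw [div_le_iff₀ hpos]; linarith
        have h2 : 0 < Γ (l+1) ω / Γ j ω := div_pos (hΓpos _ ω) hpos
        rw [abs_of_pos h2]; exact h1
      · rw [Set.indicator_of_notMem hmem]
        simpa using le_of_lt hWpos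
  -- integrability and vanishing integral of indicator of T over F_l sets
  have hTind_int : ∀ (l : ℕ) (t : Set Ω), MeasurableSet[ℱ l] t →
      Integrable (t.indicator (T l)) μ := by
    intro l t ht
    have : t.indicator (T l) = fun ω => ∑ j ∈ Finset.range (l+1),
        ((t ∩ B j l).indicator (fun ω' => Γ (l+1) ω' / Γ j ω')) ω * martdiff (l+1) ω := by
      funext ω; exact hdecomp l t ω
    rw [this]
    apply integrable_finset_sum
    intro j hj
    rw [Finset.mem_range] at hj
    obtain ⟨hm, hb⟩ := hpiece l j (by omega) t ht
    exact (hmint (l+1)).bdd_mul ((hm.mono (ℱ.le l)).aestronglyMeasurable)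
      (c := W) (Filter.Eventually.of_forall fun ω => by simpa using hb ω)
  have hTind_zero : ∀ (l : ℕ) (t : Set Ω), MeasurableSet[ℱ l] t →
      ∫ ω, t.indicator (T l) ω ∂μ = 0 := by
    intro l t ht
    have heq : (fun ω => t.indicator (T l) ω) = fun ω => ∑ j ∈ Finset.range (l+1),
        ((t ∩ B j l).indicator (fun ω' => Γ (l+1) ω' / Γ j ω')) ω * martdiff (l+1) ω := by
      funext ω; exact hdecomp l t ω
    rw [heq]
    rw [integral_finset_sum]
    · apply Finset.sum_eq_zero
      intro j hj
      rw [Finset.mem_range] at hj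
      obtain ⟨hm, hb⟩ := hpiece l j (by omega) t ht
      exact hzero l _ hm hb
    · intro j hj
      rw [Finset.mem_range] at hj
      obtain ⟨hm, hb⟩ := hpiece l j (by omega) t ht
      exact (hmint (l+1)).bdd_mul ((hm.mono (ℱ.le l)).aestronglyMeasurable)
        (c := W) (Filter.Eventually.of_forall fun ω => by simpa using hb ω)

  have hle0 := hN0.measurableSpace_le
  -- master set-integral inequality
  have hmaster : ∀ s : Set Ω, MeasurableSet[hN0.measurableSpace] s →
      IntegrableOn (fun ω => a (N0 ω) ω) s μ →
      E * ∫ ω in s, a (N1 ω) ω ∂μ ≤ ∫ ω in s, (a (N0 ω) ω + W * C * (δ + Δmax)) ∂μ := by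
    intro s hs hint0
    have smeas : MeasurableSet s := hle0 _ hs
    have hRint : IntegrableOn (fun ω => a (N0 ω) ω + W * C * (δ + Δmax)) s μ :=
      hint0.add (integrableOn_const (measure_lt_top μ s).ne)
    have hseq : ∀ l, s.indicator (T l) = (s ∩ {ω | N0 ω ≤ l}).indicator (T l) := by
      intro l
      funext ω
      by_cases hts : ω ∈ s
      · by_cases hcl : N0 ω ≤ l
        · rw [Set.indicator_of_mem hts, Set.indicator_of_mem (Set.mem_inter hts hcl)]
        · rw [Set.indicator_of_mem hts,
            Set.indicator_of_notMem (fun h => hcl h.2)]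
          rw [hT]
          simp only
          rw [if_neg (fun h => hcl h.1)]
      · rw [Set.indicator_of_notMem hts, Set.indicator_of_notMem (fun h => hts h.1)]
    have hsmeas_t : ∀ l, MeasurableSet[ℱ l] (s ∩ {ω | N0 ω ≤ l}) :=
      fun l => by
        have h := ((hN0.measurableSet s).mp hs).2 l
        have e : {ω | N0 ω ≤ l} = {ω | (N0 ω : WithTop ℕ) ≤ (l : WithTop ℕ)} := by ext ω; simp
        rw [e]; exact h
    have hTon : ∀ l, IntegrableOn (T l) s μ := by
      intro l
      have := hTind_int l _ (hsmeas_t l)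
      rw [← hseq l] at this
      exact (integrable_indicator_iff smeas).mp this
    have hTzero_s : ∀ l, ∫ ω in s, T l ω ∂μ = 0 := by
      intro l
      rw [← integral_indicator smeas, hseq l]
      exact hTind_zero l _ (hsmeas_t l)
    have hMKzero : ∀ K, ∫ ω in s, MK K ω ∂μ = 0 := by
      intro K
      have h1 : ∫ ω in s, MK K ω ∂μ = ∑ l ∈ Finset.range K, ∫ ω in s, T l ω ∂μ := by
        simp_rw [hMKT]
        exact integral_finset_sum _ (fun l _ => hTon l)
      rw [h1]
      exact Finset.sum_eq_zero fun l _ => hTzero_s l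
    have hMKon : ∀ K, IntegrableOn (fun ω => MK K ω) s μ := by
      intro K
      have h1 : (fun ω => MK K ω) = fun ω => ∑ l ∈ Finset.range K, T l ω := by
        funext ω; exact hMKT K ω
      rw [h1]
      exact integrable_finset_sum _ fun l _ => hTon l
    have hLint : ∀ K : ℕ, Integrable (fun ω => if N1 ω ≤ K then E * a (N1 ω) ω else 0) μ := by
      intro K
      have h1 : Integrable (fun ω => E * a (N1 ω) ω) μ := hintN1.const_mul E
      have h2 := h1.indicator (ℱ.le K _ (by
        have h := hN1.measurableSet_le K
        have e : {ω | N1 ω ≤ K} = {ω | (N1 ω : WithTop ℕ) ≤ (K : WithTop ℕ)} := by ext ω; simp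
        show MeasurableSet[ℱ K] {ω | N1 ω ≤ K}
        rw [e]; exact h))
      have h3 : (Set.indicator {ω | N1 ω ≤ K} fun ω => E * a (N1 ω) ω)
          = fun ω => if N1 ω ≤ K then E * a (N1 ω) ω else 0 := by
        funext ω; simp [Set.indicator_apply, Set.mem_setOf_eq]
      rw [h3] at h2
      exact h2
    have hK : ∀ K : ℕ, ∫ ω in s, (if N1 ω ≤ K then E * a (N1 ω) ω else 0) ∂μ
        ≤ ∫ ω in s, (a (N0 ω) ω + W * C * (δ + Δmax)) ∂μ := by
      intro K
      calc ∫ ω in s, (if N1 ω ≤ K then E * a (N1 ω) ω else 0) ∂μ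
          ≤ ∫ ω in s, (a (N0 ω) ω + W * C * (δ + Δmax) + MK K ω) ∂μ := by
            apply setIntegral_mono_on (hLint K).integrableOn (hRint.add (hMKon K)) smeas
            intro ω _
            exact hpath K ω
        _ = (∫ ω in s, (a (N0 ω) ω + W * C * (δ + Δmax)) ∂μ) + ∫ ω in s, MK K ω ∂μ :=
            integral_add hRint (hMKon K)
        _ = ∫ ω in s, (a (N0 ω) ω + W * C * (δ + Δmax)) ∂μ := by rw [hMKzero K, add_zero]
    have htend : Filter.Tendsto
        (fun K : ℕ => ∫ ω in s, (if N1 ω ≤ K then E * a (N1 ω) ω else 0) ∂μ)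
        Filter.atTop (nhds (∫ ω in s, E * a (N1 ω) ω ∂μ)) := by
      apply tendsto_integral_of_dominated_convergence (fun ω => E * a (N1 ω) ω)
      · intro K
        exact (hLint K).aestronglyMeasurable.restrict
      · exact (hintN1.const_mul E).integrableOn
      · intro K
        apply Filter.Eventually.of_forall
        intro ω
        by_cases hc : N1 ω ≤ K
        · rw [if_pos hc, Real.norm_eq_abs,
            abs_of_nonneg (mul_nonneg (le_of_lt hEpos) (ha_nonneg _ ω))]
        · rw [if_neg hc]
          simp only [norm_zero]
          exact mul_nonneg (le_of_lt hEpos) (ha_nonneg _ ω)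
      · apply Filter.Eventually.of_forall
        intro ω
        apply tendsto_atTop_of_eventually_const (i₀ := N1 ω)
        intro K hK'
        rw [if_pos hK']
    have hfin : ∫ ω in s, E * a (N1 ω) ω ∂μ
        ≤ ∫ ω in s, (a (N0 ω) ω + W * C * (δ + Δmax)) ∂μ := le_of_tendsto' htend hK
    rwa [integral_const_mul] at hfin
  -- conclusion
  haveI hσ : SigmaFinite (μ.trim hle0) := by infer_instance
  set g : Ω → ℝ := μ[fun ω' => a (N1 ω') ω' | hN0.measurableSpace] with hg
  have hgint : Integrable g μ := integrable_condExp
  have hgsm : StronglyMeasurable[hN0.measurableSpace] g := stronglyMeasurable_condExp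
  have hadapt : StronglyAdapted ℱ a := fun n => hameas n
  have hstop : Measurable[hN0.measurableSpace] (fun ω => a (N0 ω) ω) :=
    measurable_stoppedValue hadapt.progMeasurable_of_discrete hN0
  set R : Ω → ℝ := fun ω =>
    Real.exp (-(2 * γ * βt * δ)) * a (N0 ω) ω + W * C * (δ + Δmax) with hR
  have hEinv : Real.exp (-(2 * γ * βt * δ)) = E⁻¹ := by rw [Real.exp_neg, hE]
  have hMz : ∀ M : ℕ, μ {ω | a (N0 ω) ω ≤ (M : ℝ) ∧ R ω < g ω} = 0 := by
    intro M
    set sM := {ω | a (N0 ω) ω ≤ (M : ℝ) ∧ R ω < g ω} with hsM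
    have hRsm : Measurable[hN0.measurableSpace] R := (hstop.const_mul _).add_const _
    have hsMm : MeasurableSet[hN0.measurableSpace] sM := by
      rw [hsM, Set.setOf_and]
      exact (hstop measurableSet_Iic).inter (measurableSet_lt hRsm hgsm.measurable)
    have smeas : MeasurableSet sM := hle0 _ hsMm
    have hstopae : AEStronglyMeasurable (fun ω => a (N0 ω) ω) (μ.restrict sM) :=
      ((hstop.mono hle0 le_rfl).stronglyMeasurable).aestronglyMeasurable.restrict
    have hint0 : IntegrableOn (fun ω => a (N0 ω) ω) sM μ := by
      apply Integrable.mono' (integrable_const (M : ℝ)) hstopae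
      rw [ae_restrict_iff' smeas]
      apply Filter.Eventually.of_forall
      intro ω hω
      rw [Real.norm_eq_abs, abs_of_nonneg (ha_nonneg _ ω)]
      exact hω.1
    have hm1 := hmaster sM hsMm hint0
    have hcond : ∫ ω in sM, a (N1 ω) ω ∂μ = ∫ ω in sM, g ω ∂μ :=
      (setIntegral_condExp hle0 hintN1 hsMm).symm
    have hRon : IntegrableOn R sM μ :=
      (hint0.const_mul _).add (integrableOn_const (measure_lt_top μ sM).ne)
    have hgR : ∫ ω in sM, g ω ∂μ ≤ ∫ ω in sM, R ω ∂μ := by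
      have h2 : E * ∫ ω in sM, g ω ∂μ
          ≤ ∫ ω in sM, (a (N0 ω) ω + W * C * (δ + Δmax)) ∂μ := by
        rw [← hcond]; exact hm1
      have h3 : ∫ ω in sM, g ω ∂μ
          ≤ E⁻¹ * ∫ ω in sM, (a (N0 ω) ω + W * C * (δ + Δmax)) ∂μ := by
        have hEne : E ≠ 0 := ne_of_gt hEpos
        calc ∫ ω in sM, g ω ∂μ = E⁻¹ * (E * ∫ ω in sM, g ω ∂μ) := by field_simp
          _ ≤ E⁻¹ * ∫ ω in sM, (a (N0 ω) ω + W * C * (δ + Δmax)) ∂μ :=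
            mul_le_mul_of_nonneg_left h2 (inv_nonneg.2 hEpos.le)
      have h4 : E⁻¹ * ∫ ω in sM, (a (N0 ω) ω + W * C * (δ + Δmax)) ∂μ
          = ∫ ω in sM, E⁻¹ * (a (N0 ω) ω + W * C * (δ + Δmax)) ∂μ :=
        (integral_const_mul _ _).symm
      have h5 : ∫ ω in sM, E⁻¹ * (a (N0 ω) ω + W * C * (δ + Δmax)) ∂μ
          ≤ ∫ ω in sM, R ω ∂μ := by
        have hintE : IntegrableOn (fun ω => E⁻¹ * (a (N0 ω) ω + W * C * (δ + Δmax))) sM μ :=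
          (hint0.add (integrableOn_const (measure_lt_top μ sM).ne)).const_mul _
        apply setIntegral_mono_on hintE hRon smeas
        intro ω _
        rw [hR]
        simp only
        rw [hEinv]
        have h6 : E⁻¹ * (a (N0 ω) ω + W * C * (δ + Δmax))
            = E⁻¹ * a (N0 ω) ω + E⁻¹ * (W * C * (δ + Δmax)) := by ring
        have h7 : E⁻¹ ≤ 1 := inv_le_one_of_one_le₀ hE1
        have h8 : E⁻¹ * (W * C * (δ + Δmax)) ≤ W * C * (δ + Δmax) := by nlinarith
        rw [h6]
        linarith
      linarith [h4 ▸ h3]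
    have hdiff : ∫ ω in sM, (g ω - R ω) ∂μ ≤ 0 := by
      rw [integral_sub hgint.integrableOn hRon]
      linarith
    have hpos_ae : ∀ᵐ ω ∂(μ.restrict sM), 0 ≤ g ω - R ω := by
      rw [ae_restrict_iff' smeas]
      exact Filter.Eventually.of_forall fun ω hω => by
        have := hω.2
        linarith
    have hzero' : ∫ ω in sM, (g ω - R ω) ∂μ = 0 :=
      le_antisymm hdiff (integral_nonneg_of_ae hpos_ae)
    have heq0 := (integral_eq_zero_iff_of_nonneg_ae hpos_ae
      (hgint.integrableOn.sub hRon)).mp hzero'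
    have hfalse : ∀ᵐ ω ∂(μ.restrict sM), False := by
      filter_upwards [heq0, ae_restrict_mem smeas] with ω h1 h2
      have h3 : R ω < g ω := h2.2
      have h4 : g ω - R ω = 0 := h1
      linarith
    have h9 : (μ.restrict sM) Set.univ = 0 := by
      have := ae_iff.mp hfalse
      simpa using this
    simpa [Measure.restrict_apply_univ] using h9
  have hae : ∀ᵐ ω ∂μ, ∀ M : ℕ, ¬ (a (N0 ω) ω ≤ (M : ℝ) ∧ R ω < g ω) := by
    rw [ae_all_iff]
    intro M
    rw [ae_iff]
    simpa [not_not] using hMz M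
  filter_upwards [hae] with ω hω
  have h1 := hω ⌈a (N0 ω) ω⌉₊
  have h2 : a (N0 ω) ω ≤ (⌈a (N0 ω) ω⌉₊ : ℝ) := Nat.le_ceil _
  have h3 : ¬ (R ω < g ω) := fun hc => h1 ⟨h2, hc⟩
  have h4 : g ω ≤ R ω := not_lt.mp h3
  exact h4
end
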